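/- The feasible set of exchange rates D^δ = {δ ∈ [0,1]^{Ξ×Ξ×N} : Σ_κ δ_{νκ}(n) = 1 for all ν, n; δ_{νκ}(n)·δ_{κν}(n) ≤ 0 for all κ ≠ ν; δ_{νκ}(n) = 0 if there is no transmission line from ν to κ} is nonempty (it contains δ with δ(n) = identity for all n, provided every node has a self-loop) and compact, but for Ξ ≥ 2 with at least one transmission line between two distinct microgrids it is not convex. -/

import Mathlib

open Finset

/-- The feasible set of exchange rates contains the identity, is compact, but is
not convex when there is a transmission line between two distinct microgrids. -/
theorem stmt5 (Ξ N : ℕ) (hΞ : 2 ≤ Ξ) (hN : 1 ≤ N)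
    (E : Fin Ξ → Fin Ξ → Prop)
    (hself : ∀ ν, E ν ν) (hsymm : ∀ ν κ, E ν κ → E κ ν)
    (hedge : ∃ ν κ, ν ≠ κ ∧ E ν κ) :
    (fun (ν κ : Fin Ξ) (_ : Fin N) => if ν = κ then (1:ℝ) else 0) ∈
      setOf (fun δ : Fin Ξ → Fin Ξ → Fin N → ℝ =>
        (∀ ν κ n, δ ν κ n ∈ Set.Icc (0:ℝ) 1) ∧
        (∀ ν n, ∑ κ, δ ν κ n = 1) ∧
        (∀ ν κ n, κ ≠ ν → δ ν κ n * δ κ ν n ≤ 0) ∧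
        (∀ ν κ n, ¬ E ν κ → δ ν κ n = 0)) ∧
    IsCompact (setOf (fun δ : Fin Ξ → Fin Ξ → Fin N → ℝ =>
        (∀ ν κ n, δ ν κ n ∈ Set.Icc (0:ℝ) 1) ∧
        (∀ ν n, ∑ κ, δ ν κ n = 1) ∧
        (∀ ν κ n, κ ≠ ν → δ ν κ n * δ κ ν n ≤ 0) ∧
        (∀ ν κ n, ¬ E ν κ → δ ν κ n = 0))) ∧
    ¬ Convex ℝ (setOf (fun δ : Fin Ξ → Fin Ξ → Fin N → ℝ =>
        (∀ ν κ n, δ ν κ n ∈ Set.Icc (0:ℝ) 1) ∧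
        (∀ ν n, ∑ κ, δ ν κ n = 1) ∧
        (∀ ν κ n, κ ≠ ν → δ ν κ n * δ κ ν n ≤ 0) ∧
        (∀ ν κ n, ¬ E ν κ → δ ν κ n = 0))) := by
  classical
  have hc : ∀ (ν κ : Fin Ξ) (n : Fin N),
      Continuous (fun δ : Fin Ξ → Fin Ξ → Fin N → ℝ => δ ν κ n) :=
    fun ν κ n => (continuous_apply n).comp ((continuous_apply κ).comp (continuous_apply ν))
  refine ⟨?_, ?_, ?_⟩
  · -- identity is in S
    refine ⟨?_, ?_, ?_, ?_⟩
    · intro ν κ n; by_cases h : ν = κ <;> simp [h]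
    · intro ν n; simp
    · intro ν κ n hne
      have h1 : ν ≠ κ := fun h => hne h.symm
      simp [h1, hne]
    · intro ν κ n hE
      have h : ν ≠ κ := fun h => hE (h ▸ hself ν)
      simp [h]
  · -- compactness
    have hK : IsCompact {δ : Fin Ξ → Fin Ξ → Fin N → ℝ |
        ∀ ν κ n, δ ν κ n ∈ Set.Icc (0:ℝ) 1} := by
      have heq : {δ : Fin Ξ → Fin Ξ → Fin N → ℝ | ∀ ν κ n, δ ν κ n ∈ Set.Icc (0:ℝ) 1}
          = Set.pi Set.univ (fun _ : Fin Ξ => Set.pi Set.univ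
              (fun _ : Fin Ξ => Set.pi Set.univ (fun _ : Fin N => Set.Icc (0:ℝ) 1))) := by
        ext δ; simp only [Set.mem_setOf_eq, Set.mem_univ_pi]
      rw [heq]
      exact isCompact_univ_pi fun _ => isCompact_univ_pi fun _ =>
        isCompact_univ_pi fun _ => isCompact_Icc
    have hA : IsClosed {δ : Fin Ξ → Fin Ξ → Fin N → ℝ |
        ∀ ν κ n, δ ν κ n ∈ Set.Icc (0:ℝ) 1} := by
      have e : {δ : Fin Ξ → Fin Ξ → Fin N → ℝ | ∀ ν κ n, δ ν κ n ∈ Set.Icc (0:ℝ) 1}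
          = ⋂ ν, ⋂ κ, ⋂ n, (fun δ : Fin Ξ → Fin Ξ → Fin N → ℝ => δ ν κ n) ⁻¹'
              Set.Icc (0:ℝ) 1 := by
        ext δ; simp
      rw [e]
      exact isClosed_iInter fun ν => isClosed_iInter fun κ => isClosed_iInter fun n =>
        isClosed_Icc.preimage (hc ν κ n)
    have hB : IsClosed {δ : Fin Ξ → Fin Ξ → Fin N → ℝ | ∀ ν n, ∑ κ, δ ν κ n = 1} := by
      have e : {δ : Fin Ξ → Fin Ξ → Fin N → ℝ | ∀ ν n, ∑ κ, δ ν κ n = 1}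
          = ⋂ ν, ⋂ n, {δ : Fin Ξ → Fin Ξ → Fin N → ℝ | ∑ κ, δ ν κ n = 1} := by
        ext δ; simp
      rw [e]
      refine isClosed_iInter fun ν => isClosed_iInter fun n => isClosed_eq ?_ continuous_const
      exact continuous_finset_sum _ fun κ _ => hc ν κ n
    have hC : IsClosed {δ : Fin Ξ → Fin Ξ → Fin N → ℝ |
        ∀ ν κ n, κ ≠ ν → δ ν κ n * δ κ ν n ≤ 0} := by
      have e : {δ : Fin Ξ → Fin Ξ → Fin N → ℝ | ∀ ν κ n, κ ≠ ν → δ ν κ n * δ κ ν n ≤ 0}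
          = ⋂ ν, ⋂ κ, ⋂ n, {δ : Fin Ξ → Fin Ξ → Fin N → ℝ |
              κ ≠ ν → δ ν κ n * δ κ ν n ≤ 0} := by
        ext δ; simp
      rw [e]
      refine isClosed_iInter fun ν => isClosed_iInter fun κ => isClosed_iInter fun n => ?_
      by_cases h : κ = ν
      · have e2 : {δ : Fin Ξ → Fin Ξ → Fin N → ℝ | κ ≠ ν → δ ν κ n * δ κ ν n ≤ 0}
            = Set.univ := by ext δ; simp [h]
        rw [e2]; exact isClosed_univ
      · have e2 : {δ : Fin Ξ → Fin Ξ → Fin N → ℝ | κ ≠ ν → δ ν κ n * δ κ ν n ≤ 0}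
            = {δ : Fin Ξ → Fin Ξ → Fin N → ℝ | δ ν κ n * δ κ ν n ≤ 0} := by
          ext δ; simp [h]
        rw [e2]
        exact isClosed_le ((hc ν κ n).mul (hc κ ν n)) continuous_const
    have hD : IsClosed {δ : Fin Ξ → Fin Ξ → Fin N → ℝ |
        ∀ ν κ n, ¬ E ν κ → δ ν κ n = 0} := by
      have e : {δ : Fin Ξ → Fin Ξ → Fin N → ℝ | ∀ ν κ n, ¬ E ν κ → δ ν κ n = 0}
          = ⋂ ν, ⋂ κ, ⋂ n, {δ : Fin Ξ → Fin Ξ → Fin N → ℝ | ¬ E ν κ → δ ν κ n = 0} := by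
        ext δ; simp
      rw [e]
      refine isClosed_iInter fun ν => isClosed_iInter fun κ => isClosed_iInter fun n => ?_
      by_cases h : E ν κ
      · have e2 : {δ : Fin Ξ → Fin Ξ → Fin N → ℝ | ¬ E ν κ → δ ν κ n = 0}
            = Set.univ := by ext δ; simp [h]
        rw [e2]; exact isClosed_univ
      · have e2 : {δ : Fin Ξ → Fin Ξ → Fin N → ℝ | ¬ E ν κ → δ ν κ n = 0}
            = {δ : Fin Ξ → Fin Ξ → Fin N → ℝ | δ ν κ n = 0} := by
          ext δ; simp [h]
        rw [e2]
        exact isClosed_eq (hc ν κ n) continuous_const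
    have eS : setOf (fun δ : Fin Ξ → Fin Ξ → Fin N → ℝ =>
        (∀ ν κ n, δ ν κ n ∈ Set.Icc (0:ℝ) 1) ∧
        (∀ ν n, ∑ κ, δ ν κ n = 1) ∧
        (∀ ν κ n, κ ≠ ν → δ ν κ n * δ κ ν n ≤ 0) ∧
        (∀ ν κ n, ¬ E ν κ → δ ν κ n = 0))
        = {δ : Fin Ξ → Fin Ξ → Fin N → ℝ | ∀ ν κ n, δ ν κ n ∈ Set.Icc (0:ℝ) 1}
          ∩ ({δ : Fin Ξ → Fin Ξ → Fin N → ℝ | ∀ ν n, ∑ κ, δ ν κ n = 1}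
          ∩ ({δ : Fin Ξ → Fin Ξ → Fin N → ℝ | ∀ ν κ n, κ ≠ ν → δ ν κ n * δ κ ν n ≤ 0}
          ∩ {δ : Fin Ξ → Fin Ξ → Fin N → ℝ | ∀ ν κ n, ¬ E ν κ → δ ν κ n = 0})) := by
      ext δ; simp [Set.mem_setOf_eq, Set.mem_inter_iff]; exact Iff.rfl
    refine hK.of_isClosed_subset ?_ ?_
    · rw [eS]; exact hA.inter (hB.inter (hC.inter hD))
    · intro δ hδ; exact hδ.1
  · -- not convex
    obtain ⟨ν, κ, hνκ, hE⟩ := hedge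
    intro hconv
    set δ1 : Fin Ξ → Fin Ξ → Fin N → ℝ :=
      fun ρ σ _ => if ρ = ν then (if σ = κ then 1 else 0) else (if ρ = σ then 1 else 0)
      with hδ1
    set δ2 : Fin Ξ → Fin Ξ → Fin N → ℝ :=
      fun ρ σ _ => if ρ = κ then (if σ = ν then 1 else 0) else (if ρ = σ then 1 else 0)
      with hδ2
    have hmem1 : δ1 ∈ setOf (fun δ : Fin Ξ → Fin Ξ → Fin N → ℝ =>
        (∀ ν κ n, δ ν κ n ∈ Set.Icc (0:ℝ) 1) ∧
        (∀ ν n, ∑ κ, δ ν κ n = 1) ∧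
        (∀ ν κ n, κ ≠ ν → δ ν κ n * δ κ ν n ≤ 0) ∧
        (∀ ν κ n, ¬ E ν κ → δ ν κ n = 0)) := by
      refine ⟨?_, ?_, ?_, ?_⟩
      · intro a b n; simp only [hδ1]; split_ifs <;> norm_num
      · intro a n
        by_cases h : a = ν
        · simp [hδ1, h]
        · simp [hδ1, h]
      · intro a b n hba
        rcases eq_or_ne a ν with rfl | ha
        · rcases eq_or_ne b κ with rfl | hb
          · simp [hδ1, hνκ.symm]
          · simp [hδ1, hb]
        · have hab : a ≠ b := fun h => hba h.symm
          simp [hδ1, ha, hab]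
      · intro a b n hEab
        simp only [hδ1]
        rcases eq_or_ne a ν with rfl | ha
        · have : b ≠ κ := fun h => hEab (h ▸ hE)
          simp [this]
        · have : a ≠ b := fun h => hEab (h ▸ hself a)
          simp [ha, this]
    have hmem2 : δ2 ∈ setOf (fun δ : Fin Ξ → Fin Ξ → Fin N → ℝ =>
        (∀ ν κ n, δ ν κ n ∈ Set.Icc (0:ℝ) 1) ∧
        (∀ ν n, ∑ κ, δ ν κ n = 1) ∧
        (∀ ν κ n, κ ≠ ν → δ ν κ n * δ κ ν n ≤ 0) ∧
        (∀ ν κ n, ¬ E ν κ → δ ν κ n = 0)) := by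
      refine ⟨?_, ?_, ?_, ?_⟩
      · intro a b n; simp only [hδ2]; split_ifs <;> norm_num
      · intro a n
        by_cases h : a = κ
        · simp [hδ2, h]
        · simp [hδ2, h]
      · intro a b n hba
        rcases eq_or_ne a κ with rfl | ha
        · rcases eq_or_ne b ν with rfl | hb
          · simp [hδ2, hνκ]
          · simp [hδ2, hb]
        · have hab : a ≠ b := fun h => hba h.symm
          simp [hδ2, ha, hab]
      · intro a b n hEab
        simp only [hδ2]
        rcases eq_or_ne a κ with rfl | ha
        · have : b ≠ ν := fun h => hEab (h ▸ hsymm _ _ hE)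
          simp [this]
        · have : a ≠ b := fun h => hEab (h ▸ hself a)
          simp [ha, this]
    have hmid := hconv hmem1 hmem2 (by norm_num : (0:ℝ) ≤ 1/2)
      (by norm_num : (0:ℝ) ≤ 1/2) (by norm_num : (1:ℝ)/2 + 1/2 = 1)
    obtain ⟨-, -, h3, -⟩ := hmid
    have n0 : Fin N := ⟨0, hN⟩
    have h31 := h3 ν κ n0 (fun h => hνκ h.symm)
    have e1 : ((1/2 : ℝ) • δ1 + (1/2 : ℝ) • δ2) ν κ n0 = 1/2 := by
      simp [hδ1, hδ2, hνκ, hνκ.symm]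
    have e2 : ((1/2 : ℝ) • δ1 + (1/2 : ℝ) • δ2) κ ν n0 = 1/2 := by
      simp [hδ1, hδ2, hνκ, hνκ.symm]
    rw [e1, e2] at h31
    norm_num at h31
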